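/- arXiv:2411.13277 — 2 statements merged into one kernel-verified Lean document; each statement's English description precedes it below -/
import Mathlib

section
/- Let H be a separable real Hilbert space, M a positive integer, A : ℝ^M → H and B : H → ℝ^M bounded linear operators, and b ∈ ℝ^M. Let tanh act coordinatewise on vectors in ℝ^M. Assume that the matrix of B∘A with respect to the standard basis of ℝ^M is upper triangular with every diagonal entry strictly greater than −1. Then the functional Sylvester flow layer f : H → H defined by f(u) = u + A(tanh(B(u) + b)) is bijective. -/
/-!
If `u + A (σ (B u)) = v`, then `s := σ (B u)` solves `s = σ (B v - B (A s))` and `u = v - A s`;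
conversely every such `s` yields the preimage `v - A s`. So bijectivity reduces to unique
solvability of the finite system `s = tanh (c - T s)`, where `T` is the matrix of `B ∘ A`.
As `T` is upper triangular, this system is solved from the last coordinate upwards, each step
being a scalar equation `x = tanh (d - a x)` with `a > -1`. There `x - tanh (d - a x)` is
continuous, strictly increasing (`tanh` is increasing and `1`-Lipschitz) and changes sign, so it
has exactly one zero.
-/

open Matrix

namespace Real

theorem hasDerivAt_tanh (x : ℝ) : HasDerivAt tanh (cosh x ^ 2)⁻¹ x := by
  have h := (hasDerivAt_sinh x).div (hasDerivAt_cosh x) (cosh_pos x).ne'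
  rw [funext tanh_eq_sinh_div_cosh]
  refine h.congr_deriv ?_
  rw [← sq, ← sq, cosh_sq_sub_sinh_sq, one_div]

theorem strictMono_tanh : StrictMono tanh :=
  strictMono_of_deriv_pos fun x => by
    rw [(hasDerivAt_tanh x).deriv]
    positivity

theorem lipschitzWith_one_tanh : LipschitzWith 1 tanh :=
  lipschitzWith_of_nnnorm_deriv_le (fun x => (hasDerivAt_tanh x).differentiableAt) fun x => by
    rw [(hasDerivAt_tanh x).deriv, ← NNReal.coe_le_coe, coe_nnnorm, NNReal.coe_one, norm_inv,
      norm_pow, norm_eq_abs, abs_of_pos (cosh_pos x)]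
    exact inv_le_one_of_one_le₀ (one_le_pow₀ (one_le_cosh x))

theorem abs_tanh_le_one (x : ℝ) : |tanh x| ≤ 1 :=
  abs_le.2 ⟨(neg_one_lt_tanh x).le, (tanh_lt_one x).le⟩

end Real

theorem existsUnique_eq_comp_sub_mul {g : ℝ → ℝ} {C : ℝ} (hmono : Monotone g)
    (hlip : LipschitzWith 1 g) (hbdd : ∀ x, |g x| ≤ C) {a : ℝ} (ha : -1 < a) (d : ℝ) :
    ∃! x, x = g (d - a * x) := by
  set h : ℝ → ℝ := fun x => x - g (d - a * x)
  have hstrict : StrictMono h := by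
    intro x y hxy
    have hgap : g (d - a * y) - g (d - a * x) < y - x := by
      rcases le_or_gt 0 a with ha₀ | ha₀
      · have hle := hmono (show d - a * y ≤ d - a * x by nlinarith)
        linarith
      · have hdist := hlip.dist_le_mul (d - a * y) (d - a * x)
        rw [NNReal.coe_one, one_mul, Real.dist_eq, Real.dist_eq, abs_le] at hdist
        have habs : |d - a * y - (d - a * x)| = -a * (y - x) := by
          rw [show d - a * y - (d - a * x) = -a * (y - x) by ring, abs_of_pos (by nlinarith)]
        nlinarith
    show x - g (d - a * x) < y - g (d - a * y)
    linarith
  have hcont : Continuous h := continuous_id.sub (hlip.continuous.comp (by fun_prop))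
  have hC : 0 ≤ C := (abs_nonneg _).trans (hbdd 0)
  obtain ⟨x, -, hx⟩ : ∃ x ∈ Set.Icc (-C) C, h x = 0 := by
    refine intermediate_value_Icc (by linarith) hcont.continuousOn ⟨?_, ?_⟩
    · have hlow := (abs_le.1 (hbdd (d - a * -C))).1
      show -C - g (d - a * -C) ≤ 0
      linarith
    · have hup := (abs_le.1 (hbdd (d - a * C))).2
      show 0 ≤ C - g (d - a * C)
      linarith
  refine ⟨x, sub_eq_zero.1 hx, fun y hy => hstrict.injective ?_⟩
  show y - g (d - a * y) = h x
  rw [hx, ← hy, sub_self]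

theorem Matrix.IsUpperTriangular.existsUnique_eq_comp_sub_mulVec {R : Type*} [Ring R]
    {g : R → R} {n : ℕ} {T : Matrix (Fin n) (Fin n) R} (hT : T.IsUpperTriangular)
    (hdiag : ∀ i d, ∃! x, x = g (d - T i i * x)) (c : Fin n → R) :
    ∃! x : Fin n → R, ∀ i, x i = g (c i - (T *ᵥ x) i) := by
  induction n with
  | zero => exact ⟨Fin.elim0, Fin.rec0, fun _ _ => Subsingleton.elim _ _⟩
  | succ n ih =>
    set T' := T.submatrix Fin.succ Fin.succ
    have mulVec_succ (x : Fin (n + 1) → R) (i : Fin n) :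
        (T *ᵥ x) i.succ = (T' *ᵥ Fin.tail x) i := by
      have h0 : T i.succ 0 = 0 := hT (Fin.succ_pos i)
      simp [Matrix.mulVec, dotProduct, Fin.sum_univ_succ, h0, T', Fin.tail]
    have mulVec_zero (x : Fin (n + 1) → R) :
        (T *ᵥ x) 0 = T 0 0 * x 0 + ∑ j : Fin n, T 0 j.succ * x j.succ := by
      simp [Matrix.mulVec, dotProduct, Fin.sum_univ_succ]
    obtain ⟨x', hx', hx'_unique⟩ :=
      ih (T := T') (fun i j hij => hT (Fin.succ_lt_succ_iff.2 hij)) (fun i => hdiag i.succ)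
        (Fin.tail c)
    obtain ⟨x₀, hx₀, hx₀_unique⟩ := hdiag 0 (c 0 - ∑ j : Fin n, T 0 j.succ * x' j)
    refine ⟨Fin.cons x₀ x', fun i => ?_, fun y hy => ?_⟩
    · cases i using Fin.cases with
      | zero => simpa [mulVec_zero, sub_sub, add_comm] using hx₀
      | succ i => rw [mulVec_succ, Fin.tail_cons]; exact hx' i
    · have htail : Fin.tail y = x' := hx'_unique _ fun i => by
        rw [Fin.tail, ← mulVec_succ]; exact hy i.succ
      have hhead : y 0 = x₀ := hx₀_unique _ (by
        simpa [mulVec_zero, ← htail, Fin.tail, sub_sub, add_comm] using hy 0)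
      rw [← Fin.cons_self_tail y, hhead, htail]

theorem bijective_add_map_of_existsUnique_fixedPoint {E H : Type*} [AddCommGroup E]
    [AddCommGroup H] (A : E →+ H) (B : H →+ E) (φ : E → E)
    (hφ : ∀ w, ∃! s, s = φ (w - B (A s))) :
    Function.Bijective fun u => u + A (φ (B u)) := by
  refine Function.bijective_iff_existsUnique _ |>.2 fun v => ?_
  obtain ⟨s, hs, hs_unique⟩ := hφ (B v)
  refine ⟨v - A s, ?_, fun u hu => ?_⟩
  · simp only [map_sub, ← hs, sub_add_cancel]
  · have hu' : u = v - A (φ (B u)) := eq_sub_of_add_eq hu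
    rw [hu', hs_unique (φ (B u)) (by beta_reduce; rw [← map_sub, ← hu'])]

theorem stmt_10_general {H : Type*} [NormedAddCommGroup H] [InnerProductSpace ℝ H]
    (M : ℕ)
    (A : EuclideanSpace ℝ (Fin M) →L[ℝ] H) (B : H →L[ℝ] EuclideanSpace ℝ (Fin M))
    (b : EuclideanSpace ℝ (Fin M))
    (htri : ∀ i j : Fin M, j < i → B (A (EuclideanSpace.single j (1 : ℝ))) i = 0)
    (hdiag : ∀ i : Fin M, -1 < B (A (EuclideanSpace.single i (1 : ℝ))) i) :
    Function.Bijective fun u : H =>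
      u + A (WithLp.toLp 2 (fun i => Real.tanh (B u i + b i))) := by
  let e := WithLp.linearEquiv 2 ℝ (Fin M → ℝ)
  let A' : (Fin M → ℝ) →ₗ[ℝ] H := A.toLinearMap ∘ₗ e.symm.toLinearMap
  let B' : H →ₗ[ℝ] (Fin M → ℝ) := e.toLinearMap ∘ₗ B.toLinearMap
  let T := LinearMap.toMatrix' (B' ∘ₗ A')
  have hT : T.IsUpperTriangular := fun i j => htri i j
  have hscalar (i : Fin M) (d : ℝ) : ∃! x, x = Real.tanh (d - T i i * x) :=
    existsUnique_eq_comp_sub_mul Real.strictMono_tanh.monotone Real.lipschitzWith_one_tanh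
      Real.abs_tanh_le_one (hdiag i) d
  refine bijective_add_map_of_existsUnique_fixedPoint A'.toAddMonoidHom B'.toAddMonoidHom
    (fun w i => Real.tanh (w i + b i)) fun w => ?_
  refine (existsUnique_congr fun s => ?_).1 (hT.existsUnique_eq_comp_sub_mulVec hscalar (w + b))
  simp [funext_iff, T, LinearMap.toMatrix'_mulVec, sub_add_eq_add_sub]

/-- The functional Sylvester flow layer `f(u) = u + A(tanh(B(u) + b))` is
bijective provided the matrix of `B ∘ A` (w.r.t. the standard basis of `ℝ^M`) is upper
triangular with all diagonal entries strictly greater than `−1`. -/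
theorem stmt_10 {H : Type*} [NormedAddCommGroup H] [InnerProductSpace ℝ H]
    [CompleteSpace H] [TopologicalSpace.SeparableSpace H]
    (M : ℕ) (hM : 0 < M)
    (A : EuclideanSpace ℝ (Fin M) →L[ℝ] H) (B : H →L[ℝ] EuclideanSpace ℝ (Fin M))
    (b : EuclideanSpace ℝ (Fin M))
    (htri : ∀ i j : Fin M, j < i → B (A (EuclideanSpace.single j (1 : ℝ))) i = 0)
    (hdiag : ∀ i : Fin M, -1 < B (A (EuclideanSpace.single i (1 : ℝ))) i) :
    Function.Bijective fun u : H =>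
      u + A (WithLp.toLp 2 (fun i => Real.tanh (B u i + b i))) :=
  stmt_10_general M A B b htri hdiag
end

section
/- Let D ⊂ ℝ^d be a compact set with finite positive Lebesgue measure, and let {D_L}_{L=1}^∞ be a discrete refinement of D, i.e., a sequence of nested finite sets D_1 ⊂ D_2 ⊂ ⋯ ⊂ D with |D_L| = L such that for every ε > 0 there exists L(ε) with D contained in the union of open ε-balls centered at the points of D_{L(ε)}. Let w ∈ C(D, ℝ), u₀ ∈ L²(D), b ∈ ℝ, and define the functional planar flow layer component F : L²(D) → L²(D) by F(a) = u₀ · tanh(⟨w, a⟩_{L²(D)} + b), where ⟨w, a⟩_{L²(D)} = ∫_D w(x)a(x) dx. Then F is discretization-invariant: there exists a sequence of maps F̂_L : ℝ^L → L²(D) such that for every compact subset K of C(D, ℝ) (with the supremum norm), sup_{a ∈ K} ‖F̂_L(a|_{D_L}) − F(a)‖_{L²(D)} → 0 as L → ∞, where a|_{D_L} ∈ ℝ^L denotes the vector of values of a at the L points of D_L. -/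
/-!
Let `r_L : D → D` send each point to a nearest point of `D_L`; it is measurable, being
finitely valued with Voronoi-cell level sets, and `F̂_L(v) = tanh (∫ w · (v ∘ r_L) + b) • u₀`
evaluates `F` at the nearest-point interpolant `a ∘ r_L` of `a|_{D_L}`. Since the `D_L` are
nested nets, `r_L → id` uniformly. A compact `K ⊆ C(D, ℝ)` is uniformly equicontinuous, so
`a ∘ r_L → a` uniformly in `(a, x) ∈ K × D`; integrating against the bounded `w` over the
finite measure space `D` and applying the Lipschitz map `t ↦ tanh (t + b) • u₀` preserves
this uniformity.
-/

open MeasureTheory Filter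

theorem Real.hasDerivAt_tanh_s14 (x : ℝ) : HasDerivAt Real.tanh (1 / Real.cosh x ^ 2) x := by
  have h := (Real.hasDerivAt_sinh x).div (Real.hasDerivAt_cosh x) (Real.cosh_pos x).ne'
  have hfun : Real.sinh / Real.cosh = Real.tanh := by
    funext y; rw [Pi.div_apply, Real.tanh_eq_sinh_div_cosh]
  rw [hfun] at h
  refine h.congr_deriv ?_
  rw [← Real.cosh_sq_sub_sinh_sq x]
  ring

theorem Real.lipschitzWith_tanh : LipschitzWith 1 Real.tanh := by
  refine lipschitzWith_of_nnnorm_deriv_le (fun x => (Real.hasDerivAt_tanh_s14 x).differentiableAt)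
    fun x => ?_
  rw [(Real.hasDerivAt_tanh_s14 x).deriv, ← NNReal.coe_le_coe, coe_nnnorm, NNReal.coe_one,
    Real.norm_eq_abs, abs_of_pos (by positivity), div_le_one (by positivity)]
  nlinarith [Real.one_le_cosh x]

theorem Finset.exists_measurable_nearest {X : Type*} [PseudoMetricSpace X] [MeasurableSpace X]
    [OpensMeasurableSpace X] (s : Finset X) :
    ∃ r : X → X, Measurable r ∧ ∀ x, ∀ p ∈ s, r x ∈ s ∧ dist (r x) x ≤ dist p x := by
  rcases s.eq_empty_or_nonempty with rfl | ⟨p₀, hp₀⟩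
  · exact ⟨id, measurable_id, by simp⟩
  set e : ℕ → X := fun k => s.toList.getD k p₀
  have he : ∀ k, e k ∈ s := fun k => by
    simp only [e, List.getD_eq_getElem?_getD]
    cases h : s.toList[k]? with
    | none => exact hp₀
    | some q => exact Finset.mem_toList.1 (List.mem_of_getElem? h)
  refine ⟨SimpleFunc.nearestPt e s.toList.length, SimpleFunc.measurable _,
    fun x p hp => ⟨he _, ?_⟩⟩
  obtain ⟨k, hk, rfl⟩ := List.getElem_of_mem (Finset.mem_toList.2 hp)
  have hek : e k = s.toList[k] := by simp [e, List.getElem?_eq_getElem hk]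
  have := SimpleFunc.edist_nearestPt_le e x hk.le
  rwa [edist_dist, edist_dist, ENNReal.ofReal_le_ofReal_iff dist_nonneg, hek] at this

theorem ContinuousMap.uniformEquicontinuous_of_isCompact {X α : Type*} [PseudoMetricSpace X]
    [CompactSpace X] [PseudoMetricSpace α] {K : Set C(X, α)} (hK : IsCompact K) :
    UniformEquicontinuous fun a : K => (a : X → α) := by
  have : CompactSpace K := isCompact_iff_compactSpace.mp hK
  let evalAt : C(X, C(K, α)) := ContinuousMap.curry ⟨fun p : X × K => (p.2 : C(X, α)) p.1,
    continuous_eval.comp ((continuous_subtype_val.prodMap continuous_id).comp continuous_swap)⟩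
  have hevalAt := CompactSpace.uniformContinuous_of_continuous evalAt.continuous
  rw [Metric.uniformEquicontinuous_iff]
  intro ε hε
  obtain ⟨δ, hδ, h⟩ := Metric.uniformContinuous_iff.1 hevalAt ε hε
  exact ⟨δ, hδ, fun x y hxy a => (ContinuousMap.dist_apply_le_dist a).trans_lt (h hxy)⟩

theorem UniformEquicontinuous.tendstoUniformly_comp {ι κ β α : Type*} [UniformSpace β]
    [UniformSpace α] {F : κ → β → α} (hF : UniformEquicontinuous F) {l : Filter ι}
    {r : ι → β → β} (hr : TendstoUniformly r id l) :
    TendstoUniformly (fun i (p : κ × β) => F p.1 (r i p.2)) (fun p => F p.1 p.2) l := by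
  intro V hV
  filter_upwards [hr _ (hF V hV)] with i hi p using hi p.2 p.1

theorem exists_measurable_tendstoUniformly_id_of_nets {X : Type*} [PseudoMetricSpace X]
    [MeasurableSpace X] [OpensMeasurableSpace X] {s : ℕ → Finset X} (hs : Monotone s)
    (hnet : ∀ ε > 0, ∃ n, ∀ x, ∃ p ∈ s n, dist p x < ε) :
    ∃ r : ℕ → X → X, (∀ n, Measurable (r n)) ∧ (∀ᶠ n in atTop, ∀ x, r n x ∈ s n) ∧
      TendstoUniformly r id atTop := by
  choose r hr_meas hr using fun n => (s n).exists_measurable_nearest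
  have hclose : ∀ ε > 0, ∀ᶠ n in atTop, ∀ x, r n x ∈ s n ∧ dist (r n x) x < ε := by
    intro ε hε
    obtain ⟨n₀, hn₀⟩ := hnet ε hε
    filter_upwards [eventually_ge_atTop n₀] with n hn x
    obtain ⟨p, hp, hpx⟩ := hn₀ x
    obtain ⟨hmem, hle⟩ := hr n x p (hs hn hp)
    exact ⟨hmem, hle.trans_lt hpx⟩
  refine ⟨r, hr_meas, (hclose 1 one_pos).mono fun n h x => (h x).1,
    Metric.tendstoUniformly_iff.2 fun ε hε => (hclose ε hε).mono fun n h x => ?_⟩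
  exact dist_comm x (r n x) ▸ (h x).2

theorem tendstoUniformlyOn_integral_mul_comp {ι X : Type*} [PseudoMetricSpace X]
    [CompactSpace X] [MeasurableSpace X] [OpensMeasurableSpace X]
    (μ : Measure X) [IsFiniteMeasure μ] (w : C(X, ℝ)) {K : Set C(X, ℝ)} (hK : IsCompact K)
    {l : Filter ι} {r : ι → X → X}
    (hr_meas : ∀ i, Measurable (r i)) (hr : TendstoUniformly r id l) :
    TendstoUniformlyOn (fun i (a : C(X, ℝ)) => ∫ x, w x * a (r i x) ∂μ)
      (fun a => ∫ x, w x * a x ∂μ) l K := by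
  have hcomp := (ContinuousMap.uniformEquicontinuous_of_isCompact hK).tendstoUniformly_comp hr
  have hint (a : C(X, ℝ)) {g : X → X} (hg : Measurable g) :
      Integrable (fun x => w x * a (g x)) μ := by
    have hmeas := w.continuous.measurable.mul (a.continuous.measurable.comp hg)
    refine .of_bound hmeas.aestronglyMeasurable (‖w‖ * ‖a‖) (.of_forall fun x => ?_)
    rw [norm_mul]
    exact mul_le_mul (w.norm_coe_le_norm x) (a.norm_coe_le_norm _) (norm_nonneg _) (norm_nonneg _)
  rw [Metric.tendstoUniformlyOn_iff]
  intro ε hε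
  set C := ‖w‖ * μ.real Set.univ + 1
  have hC : 0 < C := by positivity
  filter_upwards [Metric.tendstoUniformly_iff.1 hcomp (ε / C) (by positivity)] with i hi a ha
  have hpt (x : X) : ‖w x * a x - w x * a (r i x)‖ ≤ ‖w‖ * (ε / C) := by
    rw [← mul_sub, norm_mul, ← dist_eq_norm]
    exact mul_le_mul (w.norm_coe_le_norm x) (hi (⟨a, ha⟩, x)).le dist_nonneg (norm_nonneg _)
  calc dist (∫ x, w x * a x ∂μ) (∫ x, w x * a (r i x) ∂μ)
      = ‖∫ x, (w x * a x - w x * a (r i x)) ∂μ‖ := by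
        have hint_id : Integrable (fun x => w x * a x) μ := hint a measurable_id
        rw [dist_eq_norm, ← integral_sub hint_id (hint a (hr_meas i))]
    _ ≤ ‖w‖ * (ε / C) * μ.real Set.univ := norm_integral_le_of_norm_le_const (.of_forall hpt)
    _ = ε * (‖w‖ * μ.real Set.univ / C) := by ring
    _ < ε * 1 := mul_lt_mul_of_pos_left ((div_lt_one hC).2 (lt_add_one _)) hε
    _ = ε := mul_one ε

theorem stmt_14_general (d : ℕ) (D : Set (EuclideanSpace ℝ (Fin d)))
    (hDc : IsCompact D) (hDfin : volume D < ⊤)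
    (DL : ℕ → Finset (EuclideanSpace ℝ (Fin d)))
    (hnested : ∀ L : ℕ, DL L ⊆ DL (L + 1))
    (hsub : ∀ L : ℕ, (DL L : Set (EuclideanSpace ℝ (Fin d))) ⊆ D)
    (hnet : ∀ ε > (0 : ℝ), ∃ L : ℕ,
      D ⊆ ⋃ p ∈ DL L, Metric.ball p ε)
    (w : C(D, ℝ))
    (u₀ : Lp ℝ 2 (volume.comap ((↑) : D → EuclideanSpace ℝ (Fin d))))
    (b : ℝ) :
    ∃ Fhat : (L : ℕ) → (↥((DL L : Set (EuclideanSpace ℝ (Fin d)))) → ℝ) →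
        Lp ℝ 2 (volume.comap ((↑) : D → EuclideanSpace ℝ (Fin d))),
      ∀ K : Set C(D, ℝ), IsCompact K →
        ∀ ε > (0 : ℝ), ∃ L₀ : ℕ, ∀ L > L₀, ∀ a ∈ K,
          ‖Fhat L (fun p => a ⟨p.1, hsub L p.2⟩) -
              Real.tanh ((∫ y, w y * a y
                ∂(volume.comap ((↑) : D → EuclideanSpace ℝ (Fin d)))) + b) • u₀‖ < ε := by
  classical
  have : CompactSpace D := isCompact_iff_compactSpace.mp hDc
  have : IsFiniteMeasure (volume.comap ((↑) : D → EuclideanSpace ℝ (Fin d))) := ⟨by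
    rw [(MeasurableEmbedding.subtype_coe hDc.isClosed.measurableSet).comap_apply, Set.image_univ,
      Subtype.range_coe]
    exact hDfin⟩
  have hDnet : ∀ ε > 0, ∃ L, ∀ x : D, ∃ p ∈ (DL L).subtype (· ∈ D), dist p x < ε := by
    intro ε hε
    obtain ⟨L, hL⟩ := hnet ε hε
    refine ⟨L, fun x => ?_⟩
    obtain ⟨p, hp, hxp⟩ := Set.mem_iUnion₂.1 (hL x.2)
    exact ⟨⟨p, hsub L hp⟩, Finset.mem_subtype.2 hp, Metric.mem_ball'.1 hxp⟩
  obtain ⟨r, hr_meas, hr_mem, hr⟩ := exists_measurable_tendstoUniformly_id_of_nets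
    (Finset.subtype_mono.comp (monotone_nat_of_le_succ hnested)) hDnet
  -- `v ∘ r_L`, with `v` extended by `0` off `D_L`; the junk value is only reached while `D_L = ∅`
  refine ⟨fun L v => Real.tanh
    ((∫ x, w x * Function.extend (Set.inclusion (hsub L)) v 0 (r L x)
      ∂(volume.comap ((↑) : D → EuclideanSpace ℝ (Fin d)))) + b) • u₀, ?_⟩
  intro K hK ε hε
  have hG : UniformContinuous fun t : ℝ => Real.tanh (t + b) • u₀ :=
    (ContinuousLinearMap.toSpanSingleton ℝ u₀).uniformContinuous.comp
      (Real.lipschitzWith_tanh.uniformContinuous.comp (uniformContinuous_id.add_const b))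
  have hF := hG.comp_tendstoUniformlyOn
    (tendstoUniformlyOn_integral_mul_comp (volume.comap Subtype.val) w hK hr_meas hr)
  obtain ⟨L₀, hL₀⟩ := eventually_atTop.1 ((Metric.tendstoUniformlyOn_iff.1 hF ε hε).and hr_mem)
  refine ⟨L₀, fun L hL a ha => ?_⟩
  obtain ⟨hclose, hmem⟩ := hL₀ L hL.le
  have hinterp (x : D) : Function.extend (Set.inclusion (hsub L))
      (fun p => a ⟨p.1, hsub L p.2⟩) 0 (r L x) = a (r L x) :=
    (Set.inclusion_injective (hsub L)).extend_apply _ 0 ⟨r L x, Finset.mem_subtype.1 (hmem x)⟩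
  rw [← dist_eq_norm, dist_comm]
  simp only [hinterp]
  exact hclose a ha

/-- The functional planar flow layer component
`F(a) = tanh(⟨w, a⟩_{L²(D)} + b) • u₀` on `L²(D)` is discretization-invariant with respect to
any discrete refinement `{D_L}` of the compact set `D`: there are maps `F̂_L` defined on the
vectors of point values on `D_L` such that `sup_{a ∈ K} ‖F̂_L(a|_{D_L}) − F(a)‖_{L²} → 0`
for every compact `K ⊆ C(D, ℝ)`. -/
theorem stmt_14 (d : ℕ) (D : Set (EuclideanSpace ℝ (Fin d)))
    (hDc : IsCompact D) (hDpos : 0 < volume D) (hDfin : volume D < ⊤)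
    (DL : ℕ → Finset (EuclideanSpace ℝ (Fin d)))
    (hnested : ∀ L : ℕ, DL L ⊆ DL (L + 1))
    (hsub : ∀ L : ℕ, (DL L : Set (EuclideanSpace ℝ (Fin d))) ⊆ D)
    (hcard : ∀ L : ℕ, (DL L).card = L)
    (hnet : ∀ ε > (0 : ℝ), ∃ L : ℕ,
      D ⊆ ⋃ p ∈ DL L, Metric.ball p ε)
    (w : C(D, ℝ))
    (u₀ : Lp ℝ 2 (volume.comap ((↑) : D → EuclideanSpace ℝ (Fin d))))
    (b : ℝ) :
    ∃ Fhat : (L : ℕ) → (↥((DL L : Set (EuclideanSpace ℝ (Fin d)))) → ℝ) →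
        Lp ℝ 2 (volume.comap ((↑) : D → EuclideanSpace ℝ (Fin d))),
      ∀ K : Set C(D, ℝ), IsCompact K →
        ∀ ε > (0 : ℝ), ∃ L₀ : ℕ, ∀ L > L₀, ∀ a ∈ K,
          ‖Fhat L (fun p => a ⟨p.1, hsub L p.2⟩) -
              Real.tanh ((∫ y, w y * a y
                ∂(volume.comap ((↑) : D → EuclideanSpace ℝ (Fin d)))) + b) • u₀‖ < ε :=
  stmt_14_general d D hDc hDfin DL hnested hsub hnet w u₀ b
end
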